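/- arXiv:2306.04392 — 5 statements merged into one kernel-verified Lean document; each statement's English description precedes it below -/
import Mathlib

section
/- Let L be a field of characteristic not equal to 2, and let a_1, ..., a_k be elements of L with square roots α_1, ..., α_k in the algebraic closure of L. If for every nonempty subset I of {1,...,k} the product ∏_{s∈I} a_s is not a square in L, then the degree of the field extension L(α_1,...,α_k) over L equals 2^k. -/
/-!
Induct on the set `S` of adjoined square roots, carrying the stronger invariant that every
`x ∈ L(α_s : s ∈ S)` with `x ^ 2 ∈ L` is an `L`-multiple of a monomial `∏_{s ∈ I} α_s`, `I ⊆ S`.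
For `K = L(α_s : s ∈ S)` and `i ∉ S` the invariant shows that `a_i` is not a square in `K`
(else `a_i * ∏_{s ∈ I} a_s` would be a square in `L`), so `[K(α_i) : K] = 2`. Writing an element
of `K(α_i)` as `u + v α_i`, its square lies in `K` only if `2uv = 0`, which propagates the invariant.
-/

open IntermediateField Polynomial

section SquareRoot

variable {K E : Type*} [Field K] [Field E] [Algebra K E] {b : K} {β : E}

theorem minpoly_eq_X_sq_sub_C (hβ : β ^ 2 = algebraMap K E b) (hb : ∀ c : K, c ^ 2 ≠ b) :
    minpoly K β = X ^ 2 - C b :=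
  (minpoly.eq_of_irreducible_of_monic (X_pow_sub_C_irreducible_of_prime Nat.prime_two hb)
    (by simp [hβ]) (monic_X_pow_sub_C b two_ne_zero)).symm

theorem finrank_adjoin_simple_of_sq_eq (hβ : β ^ 2 = algebraMap K E b) (hb : ∀ c : K, c ^ 2 ≠ b) :
    Module.finrank K K⟮β⟯ = 2 := by
  rw [adjoin.finrank (.of_pow two_pos (hβ ▸ isIntegral_algebraMap)),
    minpoly_eq_X_sq_sub_C hβ hb, natDegree_X_pow_sub_C]

theorem exists_eq_add_mul_of_mem_adjoin_simple (hβ : β ^ 2 = algebraMap K E b) {x : E}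
    (hx : x ∈ K⟮β⟯) : ∃ u v : K, x = algebraMap K E u + algebraMap K E v * β := by
  have hint : IsIntegral K β := .of_pow two_pos (hβ ▸ isIntegral_algebraMap)
  rw [← mem_toSubalgebra, adjoin_simple_toSubalgebra_of_isAlgebraic hint.isAlgebraic,
    Algebra.adjoin_singleton_eq_range_aeval, AlgHom.mem_range] at hx
  obtain ⟨f, rfl⟩ := hx
  have hroot : aeval β (X ^ 2 - C b) = 0 := by simp [hβ]
  have hdeg : (f %ₘ (X ^ 2 - C b)).degree ≤ 1 := by
    have := degree_modByMonic_lt f (monic_X_pow_sub_C b two_ne_zero)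
    rw [degree_X_pow_sub_C two_pos] at this
    exact Order.le_of_lt_succ this
  refine ⟨(f %ₘ (X ^ 2 - C b)).coeff 0, (f %ₘ (X ^ 2 - C b)).coeff 1, ?_⟩
  rw [← aeval_modByMonic_eq_self_of_root hroot, eq_X_add_C_of_degree_le_one hdeg]
  simp [add_comm]

theorem notMem_range_algebraMap_of_sq_eq (hβ : β ^ 2 = algebraMap K E b)
    (hb : ∀ c : K, c ^ 2 ≠ b) : β ∉ Set.range (algebraMap K E) := by
  rintro ⟨c, rfl⟩
  exact hb c (FaithfulSMul.algebraMap_injective K E (by rw [map_pow, hβ]))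

theorem eq_zero_of_algebraMap_add_mul_eq_zero (hβ : β ∉ Set.range (algebraMap K E)) {u v : K}
    (h : algebraMap K E u + algebraMap K E v * β = 0) : v = 0 := by
  by_contra hv
  refine hβ ⟨-u / v, ?_⟩
  rw [map_div₀, map_neg, div_eq_iff (by simpa using hv)]
  linear_combination -h

theorem eq_algebraMap_or_eq_algebraMap_mul_of_sq_eq (h2 : (2 : K) ≠ 0)
    (hβ : β ^ 2 = algebraMap K E b) (hb : ∀ c : K, c ^ 2 ≠ b) {x : E} (hx : x ∈ K⟮β⟯) {y : K}
    (hxy : x ^ 2 = algebraMap K E y) :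
    ∃ c : K, x = algebraMap K E c ∨ x = algebraMap K E c * β := by
  obtain ⟨u, v, rfl⟩ := exists_eq_add_mul_of_mem_adjoin_simple hβ hx
  have h2uv : 2 * u * v = 0 := by
    refine eq_zero_of_algebraMap_add_mul_eq_zero (notMem_range_algebraMap_of_sq_eq hβ hb)
      (u := u ^ 2 + v ^ 2 * b - y) ?_
    simp only [map_sub, map_add, map_mul, map_pow, map_ofNat, ← hβ, ← hxy]
    ring
  rcases mul_eq_zero.mp h2uv with hu | rfl
  · obtain rfl := (mul_eq_zero.mp hu).resolve_left h2
    exact ⟨v, .inr (by simp)⟩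
  · exact ⟨u, .inl (by simp)⟩

end SquareRoot

section Multiquadratic

variable {L Ω ι : Type*} [Field L] [Field Ω] [Algebra L Ω] {a : ι → L} {α : ι → Ω}

theorem adjoin_image_insert [DecidableEq ι] (S : Finset ι) (i : ι) :
    adjoin L (α '' ↑(insert i S)) = (adjoin (adjoin L (α '' S)) {α i}).restrictScalars L := by
  rw [adjoin_adjoin_left, Finset.coe_insert, Set.image_insert_eq, Set.insert_eq, Set.union_comm]

theorem sq_algebraMap_mul_prod_ne (hsq : ∀ s, α s ^ 2 = algebraMap L Ω (a s))
    (hns : ∀ I : Finset ι, I.Nonempty → ∀ x : L, x ^ 2 ≠ ∏ s ∈ I, a s) {I : Finset ι} {i : ι}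
    (hi : i ∉ I) (d : L) : (algebraMap L Ω d * ∏ s ∈ I, α s) ^ 2 ≠ algebraMap L Ω (a i) := by
  classical
  intro h
  have hprod : (∏ s ∈ I, α s) ^ 2 = algebraMap L Ω (∏ s ∈ I, a s) := by
    simp only [← Finset.prod_pow, map_prod, hsq]
  rw [mul_pow, hprod, ← map_pow, ← map_mul] at h
  refine hns (insert i I) (Finset.insert_nonempty i I) (d * ∏ s ∈ I, a s) ?_
  rw [Finset.prod_insert hi, ← FaithfulSMul.algebraMap_injective L Ω h]
  ring

theorem sq_ne_algebraMap_of_notMem (hsq : ∀ s, α s ^ 2 = algebraMap L Ω (a s))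
    (hns : ∀ I : Finset ι, I.Nonempty → ∀ x : L, x ^ 2 ≠ ∏ s ∈ I, a s) {S : Finset ι} {i : ι}
    (hi : i ∉ S) (hS : ∀ x ∈ adjoin L (α '' S), ∀ y : L, x ^ 2 = algebraMap L Ω y →
      ∃ c : L, ∃ I ⊆ S, x = algebraMap L Ω c * ∏ s ∈ I, α s)
    (c : adjoin L (α '' S)) : c ^ 2 ≠ algebraMap L (adjoin L (α '' S)) (a i) := by
  intro hc
  have hcΩ : (c : Ω) ^ 2 = algebraMap L Ω (a i) := by
    simpa using congrArg (algebraMap _ Ω) hc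
  obtain ⟨d, I, hI, hcd⟩ := hS c c.2 (a i) hcΩ
  exact sq_algebraMap_mul_prod_ne hsq hns (fun h ↦ hi (hI h)) d (hcd ▸ hcΩ)

theorem exists_eq_algebraMap_mul_prod_of_sq_eq (h2 : ringChar L ≠ 2)
    (hsq : ∀ s, α s ^ 2 = algebraMap L Ω (a s))
    (hns : ∀ I : Finset ι, I.Nonempty → ∀ x : L, x ^ 2 ≠ ∏ s ∈ I, a s) (S : Finset ι) :
    ∀ x ∈ adjoin L (α '' S), ∀ y : L, x ^ 2 = algebraMap L Ω y →
      ∃ c : L, ∃ I ⊆ S, x = algebraMap L Ω c * ∏ s ∈ I, α s := by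
  classical
  induction S using Finset.induction_on with
  | empty =>
    intro x hx _ _
    rw [Finset.coe_empty, Set.image_empty, adjoin_empty, mem_bot] at hx
    obtain ⟨c, rfl⟩ := hx
    exact ⟨c, ∅, subset_rfl, by simp⟩
  | insert i S hi ih =>
    intro x hx y hxy
    set K := adjoin L (α '' S)
    rw [adjoin_image_insert, mem_restrictScalars] at hx
    obtain ⟨c, rfl | rfl⟩ := eq_algebraMap_or_eq_algebraMap_mul_of_sq_eq
      (Ring.two_ne_zero (Algebra.ringChar_eq L K ▸ h2))
      (by rw [← IsScalarTower.algebraMap_apply L K Ω, hsq])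
      (sq_ne_algebraMap_of_notMem hsq hns hi ih) hx (y := algebraMap L K y) (by simpa using hxy)
    · obtain ⟨d, I, hI, hcd⟩ := ih c c.2 y (by simpa using hxy)
      exact ⟨d, I, hI.trans (Finset.subset_insert i S), by simpa using hcd⟩
    · have hai : a i ≠ 0 := fun h ↦ hns {i} (Finset.singleton_nonempty i) 0 (by simp [h])
      have hc : (c : Ω) ^ 2 = algebraMap L Ω (y / a i) := by
        rw [map_div₀, eq_div_iff (by simpa using hai), ← hsq, ← mul_pow, ← hxy]
        simp
      obtain ⟨d, I, hI, hcd⟩ := ih c c.2 _ hc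
      refine ⟨d, insert i I, Finset.insert_subset_insert i hI, ?_⟩
      rw [Finset.prod_insert (fun h ↦ hi (hI h))]
      simp only [IntermediateField.algebraMap_apply, hcd]
      ring

theorem finrank_adjoin_image_eq_two_pow (h2 : ringChar L ≠ 2)
    (hsq : ∀ s, α s ^ 2 = algebraMap L Ω (a s))
    (hns : ∀ I : Finset ι, I.Nonempty → ∀ x : L, x ^ 2 ≠ ∏ s ∈ I, a s) (S : Finset ι) :
    Module.finrank L (adjoin L (α '' S)) = 2 ^ S.card := by
  classical
  induction S using Finset.induction_on with
  | empty => simp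
  | insert i S hi ih =>
    set K := adjoin L (α '' S)
    have hb := sq_ne_algebraMap_of_notMem hsq hns hi
      (exists_eq_algebraMap_mul_prod_of_sq_eq h2 hsq hns S)
    rw [adjoin_image_insert, Finset.card_insert_of_notMem hi, pow_succ, ← ih,
      ← finrank_adjoin_simple_of_sq_eq (by rw [← IsScalarTower.algebraMap_apply L K Ω, hsq]) hb]
    exact (Module.finrank_mul_finrank L K K⟮α i⟯).symm

end Multiquadratic

theorem multiquadratic_degree
    {L : Type*} [Field L] (h2 : ringChar L ≠ 2) (k : ℕ)
    (a : Fin k → L) (α : Fin k → AlgebraicClosure L)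
    (hsq : ∀ s, (α s) ^ 2 = algebraMap L (AlgebraicClosure L) (a s))
    (hns : ∀ I : Finset (Fin k), I.Nonempty → ∀ x : L, x ^ 2 ≠ ∏ s ∈ I, a s) :
    Module.finrank L (IntermediateField.adjoin L (Set.range α)) = 2 ^ k := by
  rw [← Set.image_univ, ← Finset.coe_univ, finrank_adjoin_image_eq_two_pow h2 hsq hns,
    Finset.card_univ, Fintype.card_fin]
end

section
/- Let L be a field of characteristic not 2, and a_1,...,a_k ∈ L with square roots α_1,...,α_k in the algebraic closure. If [L(α_1,...,α_k) : L] < 2^k, then there exists a nonempty subset I ⊆ {1,...,k} such that ∏_{s∈I} a_s is a square in L. -/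
open IntermediateField Polynomial

/-- Degree-2 analysis for adjoining a square root of a non-square. -/
private lemma quad_aux {F M : Type*} [Field F] [Field M] [Algebra F M]
    (h2 : (2 : F) ≠ 0) (a : F) (hns : ∀ b : F, b ^ 2 ≠ a)
    (β : M) (hβ : β ^ 2 = algebraMap F M a) :
    Module.finrank F (IntermediateField.adjoin F ({β} : Set M)) = 2 ∧
    ∀ c : F, (∃ z ∈ IntermediateField.adjoin F ({β} : Set M),
        z ^ 2 = algebraMap F M c) →
      (∃ x : F, x ^ 2 = c) ∨ (∃ x : F, x ^ 2 = c * a) := by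
  have hirr : Irreducible (X ^ 2 - C a) :=
    X_pow_sub_C_irreducible_of_prime Nat.prime_two hns
  have haev : Polynomial.aeval β (X ^ 2 - C a : F[X]) = 0 := by
    rw [map_sub, map_pow, aeval_X, aeval_C, hβ, sub_self]
  have hmonic : (X ^ 2 - C a : F[X]).Monic := monic_X_pow_sub_C _ (by norm_num)
  have hint : IsIntegral F β := ⟨X ^ 2 - C a, hmonic, by rwa [← aeval_def]⟩
  have hmin : minpoly F β = X ^ 2 - C a :=
    (minpoly.eq_of_irreducible_of_monic hirr haev hmonic).symm
  have hdeg2 : Module.finrank F F⟮β⟯ = 2 := by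
    rw [IntermediateField.adjoin.finrank hint, hmin, natDegree_X_pow_sub_C]
  refine ⟨hdeg2, ?_⟩
  rintro c ⟨z, hzmem, hz2⟩
  have hzmem' : z ∈ F⟮β⟯ := hzmem
  set g : F⟮β⟯ := IntermediateField.AdjoinSimple.gen F β with hg
  have hgM : (g : M) = β := rfl
  have hg2 : g ^ 2 = algebraMap F F⟮β⟯ a := by
    apply Subtype.ext
    push_cast
    rw [hgM, hβ]
  set pb := IntermediateField.adjoin.powerBasis hint with hpb
  have hpbgen : pb.gen = g := IntermediateField.adjoin.powerBasis_gen hint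
  have hdim : pb.dim = 2 := by rw [← PowerBasis.finrank pb, hdeg2]
  obtain ⟨f, hfd, hf⟩ := pb.exists_eq_aeval (⟨z, hzmem'⟩ : F⟮β⟯)
  rw [hdim] at hfd
  have hfd1 : f.degree ≤ 1 := Polynomial.natDegree_le_iff_degree_le.mp
    (Nat.lt_succ_iff.mp hfd)
  set x0 : F := f.coeff 0 with hx0
  set y0 : F := f.coeff 1 with hy0
  have hfeq : f = C y0 * X + C x0 := eq_X_add_C_of_degree_le_one hfd1
  set ax := algebraMap F F⟮β⟯ x0 with hax
  set ay := algebraMap F F⟮β⟯ y0 with hay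
  have hzform : (⟨z, hzmem'⟩ : F⟮β⟯) = ay * g + ax := by
    rw [hf, hfeq, hpbgen, map_add, map_mul, aeval_C, aeval_X, aeval_C]
  have hzz : (⟨z, hzmem'⟩ : F⟮β⟯) ^ 2 = algebraMap F F⟮β⟯ c := by
    apply Subtype.ext
    push_cast
    rw [hz2]
  have hzz' : (ay * g + ax) ^ 2 = algebraMap F F⟮β⟯ c := by
    rw [← hzform]; exact hzz
  have heq : algebraMap F F⟮β⟯ (2 * x0 * y0) * g
      + algebraMap F F⟮β⟯ (x0 ^ 2 + y0 ^ 2 * a - c) = 0 := by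
    simp only [map_add, map_sub, map_mul, map_pow, map_ofNat, ← hax, ← hay]
    linear_combination hzz' - ay ^ 2 * hg2
  have hq : 2 * x0 * y0 = 0 := by
    by_contra hq
    have hpne : (C (2 * x0 * y0) * X + C (x0 ^ 2 + y0 ^ 2 * a - c) : F[X]) ≠ 0 := by
      intro h
      have hdl := degree_linear (b := x0 ^ 2 + y0 ^ 2 * a - c) hq
      rw [h] at hdl
      simp at hdl
    have haev0 : Polynomial.aeval g
        (C (2 * x0 * y0) * X + C (x0 ^ 2 + y0 ^ 2 * a - c)) = 0 := by
      rw [map_add, map_mul, aeval_C, aeval_X, aeval_C]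
      exact heq
    have hd := minpoly.degree_le_of_ne_zero F g hpne haev0
    rw [hg, IntermediateField.minpoly_gen F β, hmin,
      degree_X_pow_sub_C (by norm_num : 0 < 2), degree_linear hq] at hd
    norm_num at hd
  have hp0 : x0 ^ 2 + y0 ^ 2 * a - c = 0 := by
    rw [hq, map_zero, zero_mul, zero_add] at heq
    exact (algebraMap F F⟮β⟯).injective (by rw [heq, map_zero])
  have hxy : x0 * y0 = 0 := by
    rw [mul_assoc] at hq
    exact (mul_eq_zero.mp hq).resolve_left h2
  rcases mul_eq_zero.mp hxy with hx | hy
  · right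
    exact ⟨y0 * a, by rw [hx] at hp0; linear_combination a * hp0⟩
  · left
    exact ⟨x0, by rw [hy] at hp0; linear_combination hp0⟩

private lemma multiquad_key {L M : Type*} [Field L] [Field M] [Algebra L M]
    (h2 : ringChar L ≠ 2) :
    ∀ (k : ℕ) (a : Fin k → L) (α : Fin k → M),
      (∀ s, (α s) ^ 2 = algebraMap L M (a s)) →
      (∀ I : Finset (Fin k), I.Nonempty → ∀ x : L, x ^ 2 ≠ ∏ s ∈ I, a s) →
      Module.finrank L (IntermediateField.adjoin L (Set.range α)) = 2 ^ k ∧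
      (∀ c : L, (∃ z ∈ IntermediateField.adjoin L (Set.range α),
          z ^ 2 = algebraMap L M c) →
        ∃ (I : Finset (Fin k)) (x : L), x ^ 2 = c * ∏ s ∈ I, a s) := by
  intro k
  induction k with
  | zero =>
    intro a α _ _
    have hr : Set.range α = (∅ : Set M) := Set.range_eq_empty α
    rw [hr]
    constructor
    · rw [IntermediateField.adjoin_empty, IntermediateField.finrank_bot, pow_zero]
    · rintro c ⟨z, hz, hz2⟩
      rw [IntermediateField.adjoin_empty, IntermediateField.mem_bot] at hz
      obtain ⟨w, rfl⟩ := hz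
      refine ⟨∅, w, ?_⟩
      rw [Finset.prod_empty, mul_one]
      have : algebraMap L M (w ^ 2) = algebraMap L M c := by
        rw [map_pow]; exact hz2
      exact (algebraMap L M).injective this
  | succ k IH =>
    intro a α hsq hns
    set a' : Fin k → L := fun s => a s.succ with ha'
    set α' : Fin k → M := fun s => α s.succ with hα'
    have hns' : ∀ I : Finset (Fin k), I.Nonempty → ∀ x : L, x ^ 2 ≠ ∏ s ∈ I, a' s := by
      intro I hI x hx
      refine hns (I.map ⟨Fin.succ, Fin.succ_injective k⟩) (hI.map) x ?_
      rw [Finset.prod_map]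
      exact hx
    obtain ⟨hrank, hsquare⟩ := IH a' α' (fun s => hsq s.succ) hns'
    set K : IntermediateField L M := IntermediateField.adjoin L (Set.range α') with hKdef
    set a0 : K := algebraMap L K (a 0) with ha0
    have h2K : (2 : K) ≠ 0 := by
      have h2L : (2 : L) ≠ 0 := Ring.two_ne_zero h2
      intro h
      apply h2L
      have : algebraMap L K (2 : L) = algebraMap L K 0 := by
        rw [map_ofNat, map_zero, h]
      exact (algebraMap L K).injective this
    have hroot : (α 0) ^ 2 = algebraMap K M a0 := by
      rw [hsq 0, ha0, ← IsScalarTower.algebraMap_apply]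
    have hnsqK : ∀ b : K, b ^ 2 ≠ a0 := by
      intro b hb
      have hbM : ((b : M)) ^ 2 = algebraMap L M (a 0) := by
        have hcoe : ((b : M)) = algebraMap K M b := rfl
        rw [hcoe, ← map_pow, hb, ha0, ← IsScalarTower.algebraMap_apply]
      obtain ⟨I, x, hx⟩ := hsquare (a 0) ⟨(b : M), b.2, hbM⟩
      refine hns (insert 0 (I.map ⟨Fin.succ, Fin.succ_injective k⟩))
        ⟨0, Finset.mem_insert_self _ _⟩ x ?_
      rw [Finset.prod_insert (by simp [Fin.succ_ne_zero])]
      rw [Finset.prod_map]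
      exact hx
    obtain ⟨hdeg2, hcases⟩ := quad_aux h2K a0 hnsqK (α 0) hroot
    have hres : (IntermediateField.adjoin K ({α 0} : Set M)).restrictScalars L
        = IntermediateField.adjoin L (Set.range α) := by
      rw [IntermediateField.adjoin_adjoin_left]
      congr 1
      rw [Fin.range_fin_succ, Set.union_comm, ← Set.singleton_union, Fin.tail_def]
    have hfr : Module.finrank L (IntermediateField.adjoin L (Set.range α)) = 2 ^ (k + 1) := by
      rw [← hres]
      have hsame : Module.finrank L
            ((IntermediateField.adjoin K ({α 0} : Set M)).restrictScalars L)
          = Module.finrank L (IntermediateField.adjoin K ({α 0} : Set M)) := rfl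
      rw [hsame, ← Module.finrank_mul_finrank L K
        (IntermediateField.adjoin K ({α 0} : Set M)), hdeg2, hrank]
      ring
    refine ⟨hfr, ?_⟩
    rintro c ⟨z, hzmem, hz2⟩
    rw [← hres] at hzmem
    have hzmem' : z ∈ IntermediateField.adjoin K ({α 0} : Set M) := hzmem
    set cK : K := algebraMap L K c with hcK
    have hz2' : z ^ 2 = algebraMap K M cK := by
      rw [hz2, hcK, ← IsScalarTower.algebraMap_apply]
    have hcoeKM : ∀ w : K, ((w : M)) = algebraMap K M w := fun w => rfl
    rcases hcases cK ⟨z, hzmem', hz2'⟩ with ⟨x, hx⟩ | ⟨x, hx⟩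
    · -- cK is a square in K
      have hsqM : ((x : K) : M) ^ 2 = algebraMap L M c := by
        rw [hcoeKM, ← map_pow, hx, hcK, ← IsScalarTower.algebraMap_apply]
      obtain ⟨I, w, hw⟩ := hsquare c ⟨((x : K) : M), x.2, hsqM⟩
      refine ⟨I.map ⟨Fin.succ, Fin.succ_injective k⟩, w, ?_⟩
      rw [Finset.prod_map]
      exact hw
    · -- cK * a0 is a square in K
      have hsqM : ((x : K) : M) ^ 2 = algebraMap L M (c * a 0) := by
        rw [hcoeKM, ← map_pow, hx, hcK, ha0, ← map_mul,
          ← IsScalarTower.algebraMap_apply]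
      obtain ⟨I, w, hw⟩ := hsquare (c * a 0) ⟨((x : K) : M), x.2, hsqM⟩
      refine ⟨insert 0 (I.map ⟨Fin.succ, Fin.succ_injective k⟩), w, ?_⟩
      rw [Finset.prod_insert (by simp [Fin.succ_ne_zero]), Finset.prod_map, ← mul_assoc]
      exact hw

theorem multiquadratic_degree_contrapositive
    {L : Type*} [Field L] (h2 : ringChar L ≠ 2) (k : ℕ)
    (a : Fin k → L) (α : Fin k → AlgebraicClosure L)
    (hsq : ∀ s, (α s) ^ 2 = algebraMap L (AlgebraicClosure L) (a s))
    (hdeg : Module.finrank L (IntermediateField.adjoin L (Set.range α)) < 2 ^ k) :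
    ∃ I : Finset (Fin k), I.Nonempty ∧ ∃ x : L, x ^ 2 = ∏ s ∈ I, a s := by
  by_contra hcon
  push_neg at hcon
  have hns : ∀ I : Finset (Fin k), I.Nonempty → ∀ x : L, x ^ 2 ≠ ∏ s ∈ I, a s :=
    fun I hI x => hcon I hI x
  obtain ⟨hrank, -⟩ := multiquad_key h2 k a α hsq hns
  rw [hrank] at hdeg
  exact lt_irrefl _ hdeg
end

section
/- Let E' be an integral domain (e.g., a field) and let λ be a nonzero element of E'. Then the polynomial λ² − 2λ(X + Y) + (Y − X)² is irreducible in E'[X, Y]. -/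
/-!
As a polynomial in `X 0` over `E[X 1]`, the Cayley–Menger polynomial is the monic quadratic
`X 0 ^ 2 - 2 (λ + X 1) X 0 + (λ - X 1) ^ 2`, whose discriminant is `16 λ X 1`. A root would make
the discriminant a square, which is impossible for a polynomial of odd total degree; and a monic
quadratic over a domain without roots is irreducible.
-/

namespace Polynomial

variable {R : Type*} [CommRing R] [IsDomain R]

theorem irreducible_X_sq_add_C_mul_X_add_C {b c : R} (h : ¬IsSquare (discrim 1 b c)) :
    Irreducible (X ^ 2 + C b * X + C c) := by
  have hmonic : (X ^ 2 + C b * X + C c).Monic := by monicity!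
  have hdeg : (X ^ 2 + C b * X + C c).natDegree = 2 := by compute_degree!
  rw [hmonic.irreducible_iff_roots_eq_zero_of_degree_le_three hdeg.ge (by omega)]
  refine Multiset.eq_zero_of_forall_notMem fun x hx => h ⟨2 * 1 * x + b, ?_⟩
  have hroot : 1 * (x * x) + b * x + c = 0 := by
    simpa [sq] using (mem_roots hmonic.ne_zero).mp hx
  rw [discrim_eq_sq_of_quadratic_eq_zero hroot, sq]

end Polynomial

namespace MvPolynomial

variable {σ R : Type*}

theorem totalDegree_C_mul_X [CommSemiring R] {a : R} (ha : a ≠ 0) (i : σ) :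
    (C a * X i).totalDegree = 1 := by
  rw [C_mul_X_eq_monomial, totalDegree_monomial _ ha, Finsupp.sum_single_index rfl]

theorem not_isSquare_of_odd_totalDegree [CommRing R] [IsDomain R] {p : MvPolynomial σ R}
    (hp : Odd p.totalDegree) : ¬IsSquare p := by
  rintro ⟨u, rfl⟩
  have hu : u ≠ 0 := by rintro rfl; simp at hp
  rw [totalDegree_mul_of_isDomain hu hu] at hp
  exact Nat.not_odd_iff_even.mpr ⟨_, rfl⟩ hp

end MvPolynomial

open MvPolynomial

theorem cayley_menger_poly_irreducible
    {E : Type*} [CommRing E] [IsDomain E] (h2 : ringChar E ≠ 2)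
    (lam : E) (hl : lam ≠ 0) :
    Irreducible
      ((C (lam ^ 2) - C (2 * lam) * (X 0 + X 1) + (X 1 - X 0) ^ 2 :
        MvPolynomial (Fin 2) E)) := by
  have h16 : (16 * lam : E) ≠ 0 := by
    refine mul_ne_zero ?_ hl
    rw [show (16 : E) = 2 ^ 4 by norm_num]
    exact pow_ne_zero 4 (Ring.two_ne_zero h2)
  rw [← MulEquiv.irreducible_iff (finSuccEquiv E 1)]
  have himage : finSuccEquiv E 1 (C (lam ^ 2) - C (2 * lam) * (X 0 + X 1) + (X 1 - X 0) ^ 2) =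
      .X ^ 2 + .C (-2 * (C lam + X 0)) * .X + .C ((C lam - X 0) ^ 2) := by
    have hC (a : E) : finSuccEquiv E 1 (C a) = .C (C a) := (finSuccEquiv E 1).commutes a
    simp only [map_add, map_sub, map_mul, map_pow, hC, finSuccEquiv_X_zero,
      show (1 : Fin 2) = Fin.succ 0 from rfl, finSuccEquiv_X_succ, map_ofNat, Polynomial.C_neg]
    ring
  rw [himage]
  refine Polynomial.irreducible_X_sq_add_C_mul_X_add_C (not_isSquare_of_odd_totalDegree ?_)
  have hdiscrim :
      discrim 1 (-2 * (C lam + X 0)) ((C lam - X 0) ^ 2) = C (16 * lam) * X (0 : Fin 1) := by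
    rw [discrim, map_mul, map_ofNat]; ring
  rw [hdiscrim, totalDegree_C_mul_X h16]
  exact odd_one
end

section
/- Let p_i = (x_i, y_i), p_j = (x_j, y_j) be two fixed points in a field extension, and let p_n = (x_n, y_n) satisfy λ_{i,n} = (x_i − x_n)² + (y_i − y_n)² and λ_{j,n} = (x_j − x_n)² + (y_j − y_n)², with p_i ≠ p_j. Then both coordinates x_n and y_n lie in the field F(Δ), where F is any field containing x_i, y_i, x_j, y_j, λ_{i,n}, λ_{j,n}, and Δ = (1/2)(x_i y_j − x_i y_n + x_j y_n − x_j y_i + x_n y_i − x_n y_j) is the signed area of (p_i, p_j, p_n). In particular [F(x_n, y_n) : F] ≤ 2. -/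
set_option synthInstance.maxHeartbeats 400000
set_option maxHeartbeats 1000000
theorem last_vertex_coordinates_in_adjoin_area
    {K : Type*} [Field K] [CharZero K] (F : Subfield K)
    (xi yi xj yj xn yn lin ljn : K)
    (hxi : xi ∈ F) (hyi : yi ∈ F) (hxj : xj ∈ F) (hyj : yj ∈ F)
    (hlin : lin ∈ F) (hljn : ljn ∈ F)
    (hlineq : lin = (xi - xn) ^ 2 + (yi - yn) ^ 2)
    (hljneq : ljn = (xj - xn) ^ 2 + (yj - yn) ^ 2)
    (hne : (xi, yi) ≠ (xj, yj))
    (hnz : (xi - xj) ^ 2 + (yi - yj) ^ 2 ≠ 0) :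
    xn ∈ IntermediateField.adjoin F
        {(1 / 2) * (xi * yj - xi * yn + xj * yn - xj * yi + xn * yi - xn * yj)} ∧
    yn ∈ IntermediateField.adjoin F
        {(1 / 2) * (xi * yj - xi * yn + xj * yn - xj * yi + xn * yi - xn * yj)} ∧
    Module.finrank F (IntermediateField.adjoin F {xn, yn}) ≤ 2 := by
  set Δ : K := (1 / 2) * (xi * yj - xi * yn + xj * yn - xj * yi + xn * yi - xn * yj) with hΔ
  set E := IntermediateField.adjoin F {Δ} with hE
  have hΔE : Δ ∈ E := IntermediateField.subset_adjoin F _ rfl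
  have hFmem : ∀ z : K, z ∈ F → z ∈ E := fun z hz =>
    IntermediateField.algebraMap_mem E (⟨z, hz⟩ : F)
  -- abbreviations
  have ha : (xi - xj) ∈ F := F.sub_mem hxi hxj
  have hb : (yi - yj) ∈ F := F.sub_mem hyi hyj
  have hlij : ((xi - xj) ^ 2 + (yi - yj) ^ 2) ∈ F := F.add_mem (F.pow_mem ha 2) (F.pow_mem hb 2)
  have hc : (xi^2 + yi^2 - xj^2 - yj^2 - lin + ljn) ∈ F := by
    exact F.add_mem (F.sub_mem (F.sub_mem (F.sub_mem (F.add_mem (F.pow_mem hxi 2) (F.pow_mem hyi 2)) (F.pow_mem hxj 2)) (F.pow_mem hyj 2)) hlin) hljn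
  have hd : (xi * yj - xj * yi) ∈ F := F.sub_mem (F.mul_mem hxi hyj) (F.mul_mem hxj hyi)
  have h2lij : (2 * ((xi - xj) ^ 2 + (yi - yj) ^ 2)) ≠ 0 := by
    simp [hnz]
  have hxneq : xn = ((xi - xj) * (xi^2 + yi^2 - xj^2 - yj^2 - lin + ljn)
      + 4 * (yi - yj) * Δ - 2 * (yi - yj) * (xi * yj - xj * yi))
      / (2 * ((xi - xj) ^ 2 + (yi - yj) ^ 2)) := by
    rw [eq_div_iff h2lij, hΔ]
    linear_combination (xi - xj) * hlineq - (xi - xj) * hljneq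
  have hyneq : yn = ((yi - yj) * (xi^2 + yi^2 - xj^2 - yj^2 - lin + ljn)
      - 4 * (xi - xj) * Δ + 2 * (xi - xj) * (xi * yj - xj * yi))
      / (2 * ((xi - xj) ^ 2 + (yi - yj) ^ 2)) := by
    rw [eq_div_iff h2lij, hΔ]
    linear_combination (yi - yj) * hlineq - (yi - yj) * hljneq
  have hxnE : xn ∈ E := by
    rw [hxneq]
    exact E.div_mem
      (E.sub_mem (E.add_mem (E.mul_mem (hFmem _ ha) (hFmem _ hc))
        (E.mul_mem (E.mul_mem (hFmem 4 (ofNat_mem F 4)) (hFmem _ hb)) hΔE))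
        (E.mul_mem (E.mul_mem (hFmem 2 (ofNat_mem F 2)) (hFmem _ hb)) (hFmem _ hd)))
      (E.mul_mem (hFmem 2 (ofNat_mem F 2)) (hFmem _ hlij))
  have hynE : yn ∈ E := by
    rw [hyneq]
    exact E.div_mem
      (E.add_mem (E.sub_mem (E.mul_mem (hFmem _ hb) (hFmem _ hc))
        (E.mul_mem (E.mul_mem (hFmem 4 (ofNat_mem F 4)) (hFmem _ ha)) hΔE))
        (E.mul_mem (E.mul_mem (hFmem 2 (ofNat_mem F 2)) (hFmem _ ha)) (hFmem _ hd)))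
      (E.mul_mem (hFmem 2 (ofNat_mem F 2)) (hFmem _ hlij))
  refine ⟨hxnE, hynE, ?_⟩
  -- Δ² ∈ F (Heron / Cayley–Menger)
  have hΔsq : Δ ^ 2 = (2 * (((xi - xj) ^ 2 + (yi - yj) ^ 2) * lin + ((xi - xj) ^ 2 + (yi - yj) ^ 2) * ljn + lin * ljn) - ((xi - xj) ^ 2 + (yi - yj) ^ 2)^2 - lin^2 - ljn^2) / 16 := by
    rw [eq_div_iff (by norm_num : (16:K) ≠ 0), hΔ]
    subst hlineq hljneq
    ring
  have hΔsqF : Δ ^ 2 ∈ F := by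
    rw [hΔsq]
    exact F.div_mem (F.sub_mem (F.sub_mem (F.sub_mem
      (F.mul_mem (ofNat_mem F 2) (F.add_mem (F.add_mem (F.mul_mem hlij hlin) (F.mul_mem hlij hljn)) (F.mul_mem hlin hljn)))
      (F.pow_mem hlij 2)) (F.pow_mem hlin 2)) (F.pow_mem hljn 2)) (ofNat_mem F 16)
  -- Δ is integral of degree ≤ 2 over F
  have hint : IsIntegral F Δ := by
    refine ⟨Polynomial.X ^ 2 - Polynomial.C (⟨Δ ^ 2, hΔsqF⟩ : F), ?_, ?_⟩
    · apply Polynomial.monic_X_pow_sub_C _ (by norm_num)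
    · simp only [Polynomial.eval₂_sub, Polynomial.eval₂_pow, Polynomial.eval₂_X, Polynomial.eval₂_C]
      exact sub_self _
  have hED : FiniteDimensional F E := IntermediateField.adjoin.finiteDimensional hint
  have hfr : Module.finrank F E ≤ 2 := by
    rw [hE, IntermediateField.adjoin.finrank hint]
    have hne0 : (Polynomial.X ^ 2 - Polynomial.C (⟨Δ ^ 2, hΔsqF⟩ : F)) ≠ 0 := by
      intro h
      have := congrArg Polynomial.natDegree h
      simp [Polynomial.natDegree_X_pow_sub_C] at this
    have hdeg := minpoly.degree_le_of_ne_zero F Δ hne0 (by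
      simp only [Polynomial.aeval_def, Polynomial.eval₂_sub, Polynomial.eval₂_pow,
        Polynomial.eval₂_X, Polynomial.eval₂_C]
      exact sub_self _)
    have : (minpoly F Δ).natDegree ≤ (Polynomial.X ^ 2 - Polynomial.C (⟨Δ ^ 2, hΔsqF⟩ : F)).natDegree :=
      Polynomial.natDegree_le_natDegree hdeg
    simpa [Polynomial.natDegree_X_pow_sub_C] using this
  have hle : IntermediateField.adjoin F {xn, yn} ≤ E := by
    rw [IntermediateField.adjoin_le_iff]
    rintro z (rfl | rfl)
    · exact hxnE
    · exact hynE
  haveI : Module.Finite F (Subalgebra.toSubmodule E.toSubalgebra) := hED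
  calc Module.finrank F (IntermediateField.adjoin F {xn, yn})
      ≤ Module.finrank F E := Submodule.finrank_mono
        (show (IntermediateField.adjoin F {xn, yn}).toSubmodule ≤ E.toSubmodule from hle)
    _ ≤ 2 := hfr
end

section
/- Let K be a field of characteristic 0, let λ ∈ K, λ ≠ 0, and let X, Y be algebraically independent over K. Set F = K(X, Y). Then the element a = −(1/16)(λ² − 2λ(X + Y) + (Y − X)²) is not a square in F. -/
/-!
If `r² = -(1/16) p` in `K(X, Y)`, then `4r` is a root of the monic `T² + p` over the integrally
closed ring `K[X, Y]`, so `-p` is already a square of a polynomial. Restricting to the diagonal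
`X = Y` kills `(Y - X)²` and turns `-p` into `4λT - λ²`, which has degree one and so is not a
square in `K[T]`.
-/

open MvPolynomial

theorem IsIntegrallyClosed.isSquare_of_isSquare_algebraMap {R F : Type*} [CommRing R]
    [CommRing F] [Algebra R F] [IsFractionRing R F] [IsIntegrallyClosed R] {a : R}
    (h : IsSquare (algebraMap R F a)) : IsSquare a := by
  obtain ⟨x, hx⟩ := h
  have hint : IsIntegral R (x ^ 2) := by
    rw [sq, ← hx]
    exact isIntegral_algebraMap
  obtain ⟨y, rfl⟩ := IsIntegrallyClosed.exists_algebraMap_eq_of_isIntegral_pow two_pos hint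
  exact ⟨y, IsFractionRing.injective R F (by rw [hx, map_mul])⟩

theorem Polynomial.not_isSquare_of_odd_natDegree {R : Type*} [CommSemiring R]
    [NoZeroDivisors R] {p : Polynomial R} (hp : Odd p.natDegree) : ¬IsSquare p := by
  rintro ⟨q, rfl⟩
  rw [← sq, natDegree_pow] at hp
  exact Nat.not_odd_iff_even.mpr (even_two_mul _) hp

section AreaPolynomial

variable {K : Type*} [CommRing K]

noncomputable def areaPolynomial (lam : K) : MvPolynomial (Fin 2) K :=
  C (lam ^ 2) - C (2 * lam) * (X 0 + X 1) + (X 1 - X 0) ^ 2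

theorem aeval_diagonal_areaPolynomial (lam : K) :
    aeval (fun _ => Polynomial.X) (areaPolynomial lam) =
      Polynomial.C (lam ^ 2) - Polynomial.C (4 * lam) * Polynomial.X := by
  simp only [areaPolynomial, map_add, map_sub, map_mul, map_pow, aeval_C, aeval_X,
    Polynomial.algebraMap_eq, Polynomial.C_ofNat]
  ring

theorem not_isSquare_neg_areaPolynomial [IsDomain K] {lam : K} (h : 4 * lam ≠ 0) :
    ¬IsSquare (-areaPolynomial lam) := by
  intro hsq
  have hdiag := hsq.map (aeval (R := K) fun _ : Fin 2 => (Polynomial.X : Polynomial K))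
  rw [map_neg, aeval_diagonal_areaPolynomial, neg_sub, sub_eq_add_neg, ← Polynomial.C_neg]
    at hdiag
  refine Polynomial.not_isSquare_of_odd_natDegree ?_ hdiag
  rw [Polynomial.natDegree_linear h]
  exact odd_one

end AreaPolynomial

theorem area_element_not_square_in_rational_function_field
    {K : Type*} [Field K] [CharZero K] (lam : K) (hl : lam ≠ 0) :
    ∀ r : FractionRing (MvPolynomial (Fin 2) K),
      r ^ 2 ≠ -(1 / 16 : FractionRing (MvPolynomial (Fin 2) K)) *
        algebraMap (MvPolynomial (Fin 2) K) (FractionRing (MvPolynomial (Fin 2) K))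
          (C (lam ^ 2) - C (2 * lam) * (X 0 + X 1) + (X 1 - X 0) ^ 2) := by
  intro r hr
  have hsq : IsSquare (algebraMap (MvPolynomial (Fin 2) K) (FractionRing (MvPolynomial (Fin 2) K))
      (-areaPolynomial lam)) :=
    ⟨4 * r, by rw [map_neg, areaPolynomial]; linear_combination (-16 : _) * hr⟩
  exact not_isSquare_neg_areaPolynomial (mul_ne_zero (by norm_num) hl)
    (IsIntegrallyClosed.isSquare_of_isSquare_algebraMap hsq)
end
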